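/- Let X, Y ⊆ ℝⁿ and let φ : X → Y be a bi-Lipschitz homeomorphism, with Lipschitz extensions φ̃, ψ̃ : ℝⁿ → ℝⁿ of φ and φ⁻¹. Then the map Φ(x,y) = (x − ψ̃(y + φ̃(x)), y + φ̃(x)) on ℝⁿ × ℝⁿ is Lipschitz and its inverse Ψ(z,w) = (z + ψ̃(w), w − φ̃(z + ψ̃(w))) is Lipschitz; hence Φ is a bi-Lipschitz homeomorphism of ℝ²ⁿ. -/

import Mathlib

/-!
Φ is the composite of two shears of `ℝⁿ × ℝⁿ`: first `(x, y) ↦ (x, y + φ̃ x)`, then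
`(x, w) ↦ (x - ψ̃ w, w)`, and Ψ is the composite of their inverses in the opposite order.
A shear by an `L`-Lipschitz map is `(1 + L)`-Lipschitz, and so is its inverse, which is the shear
by the negated map; hence Φ and Ψ are both `(1 + K₁)(1 + K₂)`-Lipschitz.
-/

section Shear

variable {α E : Type*}

@[simps]
def shearSnd [AddGroup E] (f : α → E) : α × E ≃ α × E where
  toFun p := (p.1, p.2 + f p.1)
  invFun p := (p.1, p.2 - f p.1)
  left_inv p := by simp
  right_inv p := by simp

@[simps]
def shearFst [AddGroup E] (f : α → E) : E × α ≃ E × α where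
  toFun p := (p.1 + f p.2, p.2)
  invFun p := (p.1 - f p.2, p.2)
  left_inv p := by simp
  right_inv p := by simp

variable [PseudoEMetricSpace α] [SeminormedAddCommGroup E] {f : α → E} {K : NNReal}

theorem LipschitzWith.shearSnd (hf : LipschitzWith K f) : LipschitzWith (1 + K) (shearSnd f) :=
  LipschitzWith.prod_fst.prodMk (LipschitzWith.prod_snd.add (hf.comp LipschitzWith.prod_fst))
    |>.weaken (by simp)

theorem LipschitzWith.shearSnd_symm (hf : LipschitzWith K f) :
    LipschitzWith (1 + K) (_root_.shearSnd f).symm :=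
  LipschitzWith.prod_fst.prodMk (LipschitzWith.prod_snd.sub (hf.comp LipschitzWith.prod_fst))
    |>.weaken (by simp)

theorem LipschitzWith.shearFst (hf : LipschitzWith K f) : LipschitzWith (1 + K) (shearFst f) :=
  (LipschitzWith.prod_fst.add (hf.comp LipschitzWith.prod_snd)).prodMk LipschitzWith.prod_snd
    |>.weaken (by simp)

theorem LipschitzWith.shearFst_symm (hf : LipschitzWith K f) :
    LipschitzWith (1 + K) (_root_.shearFst f).symm :=
  (LipschitzWith.prod_fst.sub (hf.comp LipschitzWith.prod_snd)).prodMk LipschitzWith.prod_snd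
    |>.weaken (by simp)

end Shear

theorem stmt_1_general {n : ℕ}
    (φt ψt : EuclideanSpace ℝ (Fin n) → EuclideanSpace ℝ (Fin n))
    (K₁ K₂ : NNReal) (hφt : LipschitzWith K₁ φt) (hψt : LipschitzWith K₂ ψt) :
    ∃ K : NNReal,
      LipschitzWith K
        (fun p : EuclideanSpace ℝ (Fin n) × EuclideanSpace ℝ (Fin n) =>
          (p.1 - ψt (p.2 + φt p.1), p.2 + φt p.1)) ∧
      LipschitzWith K
        (fun q : EuclideanSpace ℝ (Fin n) × EuclideanSpace ℝ (Fin n) =>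
          (q.1 + ψt q.2, q.2 - φt (q.1 + ψt q.2))) ∧
      Function.LeftInverse
        (fun q : EuclideanSpace ℝ (Fin n) × EuclideanSpace ℝ (Fin n) =>
          (q.1 + ψt q.2, q.2 - φt (q.1 + ψt q.2)))
        (fun p => (p.1 - ψt (p.2 + φt p.1), p.2 + φt p.1)) ∧
      Function.RightInverse
        (fun q : EuclideanSpace ℝ (Fin n) × EuclideanSpace ℝ (Fin n) =>
          (q.1 + ψt q.2, q.2 - φt (q.1 + ψt q.2)))
        (fun p => (p.1 - ψt (p.2 + φt p.1), p.2 + φt p.1)) := by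
  let Φ := (shearSnd φt).trans (shearFst ψt).symm
  have hΦ : ⇑Φ = fun p => (p.1 - ψt (p.2 + φt p.1), p.2 + φt p.1) := rfl
  have hΦsymm : ⇑Φ.symm = fun q => (q.1 + ψt q.2, q.2 - φt (q.1 + ψt q.2)) := rfl
  refine ⟨(1 + K₂) * (1 + K₁), ?_, ?_, ?_, ?_⟩
  · rw [← hΦ]
    exact hψt.shearFst_symm.comp hφt.shearSnd
  · rw [← hΦsymm, mul_comm]
    exact hφt.shearSnd_symm.comp hψt.shearFst
  · rw [← hΦ, ← hΦsymm]
    exact Φ.symm_apply_apply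
  · rw [← hΦ, ← hΦsymm]
    exact Φ.apply_symm_apply

theorem stmt_1 {n : ℕ} (X Y : Set (EuclideanSpace ℝ (Fin n)))
    (φ : X ≃ Y) (Kφ Kψ : NNReal)
    (hφ : LipschitzWith Kφ (fun x : X => (φ x : EuclideanSpace ℝ (Fin n))))
    (hψ : LipschitzWith Kψ (fun y : Y => (φ.symm y : EuclideanSpace ℝ (Fin n))))
    (φt ψt : EuclideanSpace ℝ (Fin n) → EuclideanSpace ℝ (Fin n))
    (K₁ K₂ : NNReal) (hφt : LipschitzWith K₁ φt) (hψt : LipschitzWith K₂ ψt)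
    (hext₁ : ∀ x : X, φt x = φ x) (hext₂ : ∀ y : Y, ψt y = φ.symm y) :
    ∃ K : NNReal,
      LipschitzWith K
        (fun p : EuclideanSpace ℝ (Fin n) × EuclideanSpace ℝ (Fin n) =>
          (p.1 - ψt (p.2 + φt p.1), p.2 + φt p.1)) ∧
      LipschitzWith K
        (fun q : EuclideanSpace ℝ (Fin n) × EuclideanSpace ℝ (Fin n) =>
          (q.1 + ψt q.2, q.2 - φt (q.1 + ψt q.2))) ∧
      Function.LeftInverse
        (fun q : EuclideanSpace ℝ (Fin n) × EuclideanSpace ℝ (Fin n) =>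
          (q.1 + ψt q.2, q.2 - φt (q.1 + ψt q.2)))
        (fun p => (p.1 - ψt (p.2 + φt p.1), p.2 + φt p.1)) ∧
      Function.RightInverse
        (fun q : EuclideanSpace ℝ (Fin n) × EuclideanSpace ℝ (Fin n) =>
          (q.1 + ψt q.2, q.2 - φt (q.1 + ψt q.2)))
        (fun p => (p.1 - ψt (p.2 + φt p.1), p.2 + φt p.1)) :=
  stmt_1_general φt ψt K₁ K₂ hφt hψt
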